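/- For the kernel B_β defined above, for any fixed x > 0 and x' > 0 with x ≠ x', B_β(x,x') → 0 as β → ∞. -/

import Mathlib

open Real Filter

/-- The Compton redistribution kernel `B_β(x,x')`, written with
`|𝐱' − 𝐱|² = x² + x'² − 2 x x' t` where `t = cos θ`. -/
noncomputable def Bbeta (m β x x' : ℝ) : ℝ :=
  Real.sqrt β * Real.exp ((x + x') / 2) *
    ∫ t in (-1:ℝ)..1,
      (1 + t^2) / Real.sqrt (x^2 + x'^2 - 2*x*x'*t) *
        Real.exp (-(β * (m * (x - x')^2 +
          (x^2 + x'^2 - 2*x*x'*t)^2 / (4 * m * β^2)) / (2 * (x^2 + x'^2 - 2*x*x'*t))))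

/-!
For `t ∈ [-1, 1]` the squared distance `r = x² + x'² − 2xx't` lies in `[(x − x')², (x + x')²]`.
Hence the prefactor `(1 + t²)/√r` is at most `2/|x − x'|`, and dropping the `r²/(4mβ²)` term
bounds the exponent below by `c β` with `c = m (x − x')² / (2 (x + x')²) > 0`.
So `|B_β| ≲ √β e^{−cβ} → 0`.
-/

open Set

noncomputable def comptonIntegrand (m β x x' t : ℝ) : ℝ :=
  (1 + t^2) / √(x^2 + x'^2 - 2*x*x'*t) *
    exp (-(β * (m * (x - x')^2 +
      (x^2 + x'^2 - 2*x*x'*t)^2 / (4 * m * β^2)) / (2 * (x^2 + x'^2 - 2*x*x'*t))))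

lemma Bbeta_eq_integral_comptonIntegrand (m β x x' : ℝ) :
    Bbeta m β x x' = √β * exp ((x + x') / 2) * ∫ t in (-1:ℝ)..1, comptonIntegrand m β x x' t :=
  rfl

lemma sq_sub_le_sq_add_sq_sub_mul {x x' t : ℝ} (hxx' : 0 ≤ x * x') (ht : t ≤ 1) :
    (x - x')^2 ≤ x^2 + x'^2 - 2*x*x'*t := by
  nlinarith [mul_nonneg hxx' (sub_nonneg.mpr ht)]

lemma sq_add_sq_sub_mul_le_sq_add {x x' t : ℝ} (hxx' : 0 ≤ x * x') (ht : -1 ≤ t) :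
    x^2 + x'^2 - 2*x*x'*t ≤ (x + x')^2 := by
  nlinarith [mul_nonneg hxx' (neg_le_iff_add_nonneg.mp ht)]

lemma div_le_gaussian_exponent {m β d r R : ℝ} (hm : 0 ≤ m) (hβ : 0 ≤ β) (hd : 0 ≤ d)
    (hr : 0 < r) (hrR : r ≤ R) :
    β * (m * d) / (2 * R) ≤ β * (m * d + r^2 / (4 * m * β^2)) / (2 * r) := by
  have hextra : 0 ≤ r^2 / (4 * m * β^2) := by positivity
  exact div_le_div₀ (by positivity) (by nlinarith) (by positivity) (by linarith)

lemma norm_comptonIntegrand_le {m β x x' t : ℝ} (hm : 0 ≤ m) (hβ : 0 ≤ β) (hxx' : 0 ≤ x * x')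
    (hne : x ≠ x') (ht : t ∈ Icc (-1) 1) :
    ‖comptonIntegrand m β x x' t‖ ≤
      2 / |x - x'| * exp (-(m * (x - x')^2 / (2 * (x + x')^2) * β)) := by
  set r := x^2 + x'^2 - 2*x*x'*t
  have hlow : (x - x')^2 ≤ r := sq_sub_le_sq_add_sq_sub_mul hxx' ht.2
  have hup : r ≤ (x + x')^2 := sq_add_sq_sub_mul_le_sq_add hxx' ht.1
  have hsub : x - x' ≠ 0 := sub_ne_zero.mpr hne
  have hr : 0 < r := lt_of_lt_of_le (by positivity) hlow
  have hprefactor : (1 + t^2) / √r ≤ 2 / |x - x'| := by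
    refine div_le_div₀ zero_le_two (by nlinarith [ht.1, ht.2]) (abs_pos.mpr hsub) ?_
    rw [← sqrt_sq_eq_abs]
    exact sqrt_le_sqrt hlow
  have hexponent : m * (x - x')^2 / (2 * (x + x')^2) * β ≤
      β * (m * (x - x')^2 + r^2 / (4 * m * β^2)) / (2 * r) := by
    calc m * (x - x')^2 / (2 * (x + x')^2) * β = β * (m * (x - x')^2) / (2 * (x + x')^2) := by
          ring
      _ ≤ _ := div_le_gaussian_exponent hm hβ (sq_nonneg _) hr hup
  rw [comptonIntegrand, norm_mul, norm_div, norm_of_nonneg (by positivity : (0:ℝ) ≤ 1 + t^2),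
    norm_of_nonneg (sqrt_nonneg _), norm_of_nonneg (exp_nonneg _)]
  exact mul_le_mul hprefactor (exp_le_exp.mpr (neg_le_neg hexponent)) (exp_nonneg _)
    (by positivity)

lemma norm_Bbeta_le {m β x x' : ℝ} (hm : 0 ≤ m) (hβ : 0 ≤ β) (hxx' : 0 ≤ x * x')
    (hne : x ≠ x') :
    ‖Bbeta m β x x'‖ ≤ 4 * exp ((x + x') / 2) / |x - x'| *
      (√β * exp (-(m * (x - x')^2 / (2 * (x + x')^2) * β))) := by
  have hintegral := intervalIntegral.norm_integral_le_of_norm_le_const (a := -1) (b := 1)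
    fun t ht => norm_comptonIntegrand_le hm hβ hxx' hne
      (Ioc_subset_Icc_self (by rwa [uIoc_of_le (by norm_num)] at ht))
  rw [Bbeta_eq_integral_comptonIntegrand, norm_mul, norm_mul, norm_of_nonneg (sqrt_nonneg _),
    norm_of_nonneg (exp_nonneg _)]
  calc √β * exp ((x + x') / 2) * ‖∫ t in (-1:ℝ)..1, comptonIntegrand m β x x' t‖
      ≤ √β * exp ((x + x') / 2) *
          (2 / |x - x'| * exp (-(m * (x - x')^2 / (2 * (x + x')^2) * β)) * |1 - (-1)|) :=
        mul_le_mul_of_nonneg_left hintegral (by positivity)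
    _ = _ := by norm_num; ring

lemma tendsto_sqrt_mul_exp_neg_mul_atTop_nhds_zero {c : ℝ} (hc : 0 < c) :
    Tendsto (fun β => √β * exp (-(c * β))) atTop (nhds 0) := by
  simpa only [sqrt_eq_rpow, neg_mul] using tendsto_rpow_mul_exp_neg_mul_atTop_nhds_zero (1/2) c hc

theorem stmt17 (m x x' : ℝ) (hm : 0 < m) (hx : 0 < x) (hx' : 0 < x') (hne : x ≠ x') :
    Tendsto (fun β => Bbeta m β x x') atTop (nhds 0) := by
  have hrate : 0 < m * (x - x')^2 / (2 * (x + x')^2) := by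
    have := sub_ne_zero.mpr hne
    positivity
  have hbound := (tendsto_sqrt_mul_exp_neg_mul_atTop_nhds_zero hrate).const_mul
    (4 * exp ((x + x') / 2) / |x - x'|)
  rw [mul_zero] at hbound
  refine squeeze_zero_norm' ?_ hbound
  filter_upwards [eventually_ge_atTop 0] with β hβ
  exact norm_Bbeta_le hm.le hβ (mul_pos hx hx').le hne
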